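/- arXiv:1305.5502 — 2 statements merged into one kernel-verified Lean document; each statement's English description precedes it below -/
import Mathlib

section
/- The natural density of pairs of coprime positive integers is 1/ζ(2); i.e., the limit as N → ∞ of (1/N²)·#{(x,y) : 1 ≤ x,y ≤ N, gcd(x,y) = 1} equals 6/π². -/
/-!
Möbius inversion over the gcd gives the exact count `∑_{d ≤ N} μ(d) ⌊N/d⌋²` of coprime pairs in
`[1, N]²`. After division by `N²` the `d`-th term tends to `μ(d)/d²` and is bounded by `1/d²`,
so Tannery's theorem (dominated convergence for series) yields the limit
`∑ μ(d)/d² = 1/ζ(2) = 6/π²`.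
-/

open Filter Finset ArithmeticFunction LSeries.notation Topology
open scoped ArithmeticFunction.Moebius

lemma sum_moebius_filter_dvd_Icc {g N : ℕ} (hg : g ∈ Icc 1 N) :
    ∑ d ∈ Icc 1 N with d ∣ g, μ d = if g = 1 then 1 else 0 := by
  rw [mem_Icc] at hg
  have hdivisors : {d ∈ Icc 1 N | d ∣ g} = g.divisors := by
    ext d
    simp only [mem_filter, mem_Icc, Nat.mem_divisors]
    constructor
    · rintro ⟨-, hd⟩
      exact ⟨hd, by omega⟩
    · rintro ⟨hd, -⟩
      exact ⟨⟨Nat.pos_of_dvd_of_pos hd hg.1, (Nat.le_of_dvd hg.1 hd).trans hg.2⟩, hd⟩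
  rw [hdivisors, ← coe_mul_zeta_apply, moebius_mul_coe_zeta, one_apply]

lemma card_filter_eq_one_eq_sum_moebius {α : Type*} (s : Finset α) (g : α → ℕ) (N : ℕ)
    (hg : ∀ x ∈ s, g x ∈ Icc 1 N) :
    (#{x ∈ s | g x = 1} : ℤ) = ∑ d ∈ Icc 1 N, μ d * #{x ∈ s | d ∣ g x} := by
  calc (#{x ∈ s | g x = 1} : ℤ)
      = ∑ x ∈ s, ∑ d ∈ Icc 1 N with d ∣ g x, μ d := by
        rw [card_filter, Nat.cast_sum]
        refine sum_congr rfl fun x hx => ?_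
        rw [sum_moebius_filter_dvd_Icc (hg x hx)]
        split_ifs <;> rfl
    _ = ∑ d ∈ Icc 1 N, μ d * #{x ∈ s | d ∣ g x} := by
        simp_rw [sum_filter]
        rw [sum_comm]
        refine sum_congr rfl fun d _ => ?_
        rw [← sum_filter, sum_const, nsmul_eq_mul, mul_comm]

lemma card_filter_dvd_Icc (N d : ℕ) : #{x ∈ Icc 1 N | d ∣ x} = N / d := by
  rw [show Icc 1 N = Ioc 0 N from Icc_add_one_left_eq_Ioc 0 N]
  exact Nat.Ioc_filter_dvd_card_eq_div N d

lemma card_filter_dvd_gcd (N d : ℕ) :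
    #{p ∈ Icc 1 N ×ˢ Icc 1 N | d ∣ p.1.gcd p.2} = (N / d) ^ 2 := by
  simp_rw [Nat.dvd_gcd_iff]
  rw [filter_product, card_product, card_filter_dvd_Icc, sq]

lemma natCast_div_div_natCast_le (N d : ℕ) : ((N / d : ℕ) : ℝ) / N ≤ 1 / d := by
  rcases N.eq_zero_or_pos with rfl | hN
  · simp
  calc ((N / d : ℕ) : ℝ) / N ≤ ((N : ℝ) / d) / N := by gcongr; exact Nat.cast_div_le
    _ = 1 / d := by field_simp

lemma tendsto_natCast_div_div_natCast (d : ℕ) :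
    Tendsto (fun N : ℕ => ((N / d : ℕ) : ℝ) / N) atTop (𝓝 (1 / d)) := by
  rcases d.eq_zero_or_pos with rfl | hd
  · simp
  have hfloor : Tendsto (fun N : ℕ => (⌊(N : ℝ) / d⌋₊ : ℝ) / ((N : ℝ) / d) * (1 / d)) atTop
      (𝓝 (1 * (1 / d))) :=
    (tendsto_nat_floor_div_atTop.comp
      (tendsto_natCast_atTop_atTop.atTop_div_const (by positivity))).mul_const _
  rw [one_mul] at hfloor
  refine hfloor.congr' ?_
  filter_upwards [eventually_gt_atTop 0] with N hN
  rw [Nat.floor_div_eq_div]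
  field_simp

lemma LSeries_moebius_eq_inv_riemannZeta {s : ℂ} (hs : 1 < s.re) :
    L ↗μ s = (riemannZeta s)⁻¹ := by
  rw [← LSeries_zeta_eq_riemannZeta hs]
  exact eq_inv_of_mul_eq_one_right (LSeries_zeta_mul_Lseries_moebius hs)

lemma tsum_moebius_div_sq : ∑' d : ℕ, (μ d : ℝ) / d ^ 2 = 6 / Real.pi ^ 2 := by
  have h2 : L ↗μ 2 = 6 / (Real.pi : ℂ) ^ 2 := by
    rw [LSeries_moebius_eq_inv_riemannZeta (by norm_num), riemannZeta_two, inv_div]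
  apply Complex.ofReal_injective
  push_cast
  rw [← h2, LSeries]
  refine tsum_congr fun n => ?_
  rcases eq_or_ne n 0 with rfl | hn
  · simp
  · rw [LSeries.term_of_ne_zero hn, Complex.cpow_ofNat]

lemma card_coprime_pairs_div_sq_eq_tsum (N : ℕ) :
    (#{p ∈ Icc 1 N ×ˢ Icc 1 N | p.1.gcd p.2 = 1} : ℝ) / (N : ℝ) ^ 2 =
      ∑' d : ℕ, (μ d : ℝ) * (((N / d : ℕ) : ℝ) / N) ^ 2 := by
  have hgcd : ∀ p ∈ Icc 1 N ×ˢ Icc 1 N, p.1.gcd p.2 ∈ Icc 1 N := by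
    simp only [mem_product, mem_Icc]
    rintro p ⟨⟨h1, hN⟩, -⟩
    exact ⟨Nat.gcd_pos_of_pos_left _ h1, (Nat.gcd_le_left _ h1).trans hN⟩
  have hcount : (#{p ∈ Icc 1 N ×ˢ Icc 1 N | p.1.gcd p.2 = 1} : ℝ) =
      ∑ d ∈ Icc 1 N, (μ d : ℝ) * ((N / d : ℕ) : ℝ) ^ 2 := by
    have hsieve := congrArg (Int.cast : ℤ → ℝ)
      (card_filter_eq_one_eq_sum_moebius _ (fun p : ℕ × ℕ => p.1.gcd p.2) N hgcd)
    simp only [card_filter_dvd_gcd] at hsieve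
    push_cast at hsieve
    exact hsieve
  have hsupport : ∀ d ∉ Icc 1 N, (μ d : ℝ) * (((N / d : ℕ) : ℝ) / N) ^ 2 = 0 := by
    intro d hd
    rcases d.eq_zero_or_pos with rfl | hd0
    · simp
    · have hNd : N < d := by
        simp only [mem_Icc, not_and, not_le] at hd
        exact hd hd0
      simp [Nat.div_eq_of_lt hNd]
  rw [hcount, tsum_eq_sum hsupport, sum_div]
  refine sum_congr rfl fun d _ => ?_
  ring

theorem coprime_pairs_density :
    Tendsto (fun N : ℕ =>
        (((Finset.Icc 1 N ×ˢ Finset.Icc 1 N).filter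
            (fun p : ℕ × ℕ => Nat.gcd p.1 p.2 = 1)).card : ℝ) / (N : ℝ) ^ 2)
      atTop (nhds (6 / Real.pi ^ 2)) := by
  simp_rw [card_coprime_pairs_div_sq_eq_tsum, ← tsum_moebius_div_sq]
  refine tendsto_tsum_of_dominated_convergence (bound := fun d : ℕ => 1 / (d : ℝ) ^ 2)
    (Real.summable_one_div_nat_pow.mpr one_lt_two) (fun d => ?_)
    (Eventually.of_forall fun N d => ?_)
  · simpa [div_eq_mul_inv] using
      ((tendsto_natCast_div_div_natCast d).pow 2).const_mul (μ d : ℝ)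
  · have hμ : |(μ d : ℝ)| ≤ 1 := by exact_mod_cast abs_moebius_le_one
    have hq := natCast_div_div_natCast_le N d
    calc ‖(μ d : ℝ) * (((N / d : ℕ) : ℝ) / N) ^ 2‖
        = |(μ d : ℝ)| * (((N / d : ℕ) : ℝ) / N) ^ 2 := by simp
      _ ≤ 1 * (1 / d) ^ 2 := by gcongr
      _ = 1 / (d : ℝ) ^ 2 := by ring
end

section
/- Let a + bi ∈ ℤ[i] with gcd(a,b) = 1 and a,b not both zero. Then the closed fundamental square with vertices 0, a+bi, i(a+bi), (1+i)(a+bi) contains exactly a² + b² − 1 interior lattice points and exactly 4 boundary lattice points of ℤ[i]. -/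
/-!
Multiplication by `conj z`, `z = a + b i`, maps `ℤ[i] = ℤ²` bijectively onto the lattice
`L = {(u, v) | N ∣ a u - b v}`, `N = a² + b²`, and the square onto `[0, N]²`. As `a` and `b` are
units modulo `N`, every `v` has exactly one partner `u` modulo `N` in `L`, and `N ∣ u ↔ N ∣ v`.
So each `v ∈ (0, N)` contributes one interior point, while a boundary point has one, hence both,
coordinates in `{0, N}`: it is a vertex.
-/

open Set Complex Pointwise

namespace Complex

theorem convexHull_unitSquare :
    convexHull ℝ ({0, 1, I, 1 + I} : Set ℂ) = Icc 0 1 ×ℂ Icc 0 1 := by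
  have hvertices : ({0, 1, I, 1 + I} : Set ℂ) = {0, 1} ×ℂ {0, 1} := by
    ext w
    simp only [mem_insert_iff, mem_singleton_iff, mem_reProdIm, Complex.ext_iff, zero_re, zero_im,
      one_re, one_im, I_re, I_im, add_re, add_im, add_zero, zero_add]
    tauto
  rw [hvertices, convexHull_reProdIm, convexHull_pair, segment_eq_Icc zero_le_one]

theorem convexHull_square (z : ℂ) :
    convexHull ℝ ({0, z, I * z, (1 + I) * z} : Set ℂ) = z • (Icc 0 1 ×ℂ Icc 0 1) := by
  have hvertices : ({0, z, I * z, (1 + I) * z} : Set ℂ) = z • {0, 1, I, 1 + I} := by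
    simp [smul_set_insert, mul_comm]
  rw [hvertices, ← convexHull_unitSquare, ← image_smul, ← image_smul]
  exact ((LinearMap.mulLeft ℝ z).image_convexHull _).symm

theorem interior_convexHull_square {z : ℂ} (hz : z ≠ 0) :
    interior (convexHull ℝ ({0, z, I * z, (1 + I) * z} : Set ℂ)) = z • (Ioo 0 1 ×ℂ Ioo 0 1) := by
  rw [convexHull_square, interior_smul₀ hz, interior_reProdIm, interior_Icc]

end Complex

section ResidueLattice

variable {a b N : ℤ}

theorem Int.dvd_iff_eq_zero_or_eq_of_mem_Icc {u : ℤ} (hu : u ∈ Icc 0 N) :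
    N ∣ u ↔ u = 0 ∨ u = N := by
  constructor
  · intro h
    rcases hu.2.lt_or_eq with hlt | heq
    · exact Or.inl (Int.eq_zero_of_dvd_of_nonneg_of_lt hu.1 hlt h)
    · exact Or.inr heq
  · rintro (rfl | rfl)
    exacts [dvd_zero N, dvd_rfl]

theorem dvd_iff_dvd_of_dvd_mul_sub_mul (ha : IsCoprime a N) (hb : IsCoprime b N) {u v : ℤ}
    (h : N ∣ a * u - b * v) : N ∣ u ↔ N ∣ v := by
  constructor
  · intro hu
    exact hb.symm.dvd_of_dvd_mul_left <| (dvd_sub_right (hu.mul_left a)).mp h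
  · intro hv
    exact ha.symm.dvd_of_dvd_mul_left <| (dvd_sub_left (hv.mul_left b)).mp h

theorem bijOn_snd_dvd_mul_sub_mul_inter_Ioo (ha : IsCoprime a N) (hb : IsCoprime b N)
    (hN : 0 < N) :
    BijOn Prod.snd ({q : ℤ × ℤ | N ∣ a * q.1 - b * q.2} ∩ Ioo 0 N ×ˢ Ioo 0 N) (Ioo 0 N) := by
  refine ⟨fun q hq => hq.2.2, ?_, ?_⟩
  · rintro ⟨u, v⟩ ⟨hq, ⟨hu0, huN⟩, -⟩ ⟨u', v'⟩ ⟨hq', ⟨hu0', huN'⟩, -⟩ (rfl : v = v')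
    dsimp only at hu0 huN hu0' huN'
    have hdvd : N ∣ u - u' :=
      ha.symm.dvd_of_dvd_mul_left <| by simpa [mul_sub] using dvd_sub hq hq'
    have := Int.eq_zero_of_abs_lt_dvd hdvd <| abs_sub_lt_iff.mpr ⟨by linarith, by linarith⟩
    simp only [Prod.mk.injEq, and_true]
    linarith
  · intro v hv
    obtain ⟨c, d, hcd⟩ := ha
    set u := c * b * v % N with hu_def
    have hq : N ∣ a * u - b * v := ⟨-(d * b * v) - a * (c * b * v / N), by
      rw [hu_def, Int.emod_def]
      linear_combination (b * v) * hcd⟩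
    have hu0 : u ≠ 0 := by
      intro hu
      have hv_dvd := (dvd_iff_dvd_of_dvd_mul_sub_mul ⟨c, d, hcd⟩ hb hq).mp (hu ▸ dvd_zero N)
      exact hv.1.ne' (Int.eq_zero_of_dvd_of_nonneg_of_lt hv.1.le hv.2 hv_dvd)
    have hu : u ∈ Ioo 0 N := ⟨(Int.emod_nonneg _ hN.ne').lt_of_ne' hu0, Int.emod_lt_of_pos _ hN⟩
    exact ⟨(u, v), ⟨hq, hu, hv⟩, rfl⟩

theorem ncard_dvd_mul_sub_mul_inter_Ioo (ha : IsCoprime a N) (hb : IsCoprime b N) (hN : 0 < N) :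
    (({q : ℤ × ℤ | N ∣ a * q.1 - b * q.2} ∩ Ioo 0 N ×ˢ Ioo 0 N).ncard : ℤ) = N - 1 := by
  rw [(bijOn_snd_dvd_mul_sub_mul_inter_Ioo ha hb hN).ncard_eq, ← Finset.coe_Ioo,
    ncard_coe_finset, Int.card_Ioo]
  omega

theorem dvd_mul_sub_mul_inter_Icc_diff_Ioo (ha : IsCoprime a N) (hb : IsCoprime b N)
    (hN : 0 ≤ N) :
    {q : ℤ × ℤ | N ∣ a * q.1 - b * q.2} ∩ (Icc 0 N ×ˢ Icc 0 N \ Ioo 0 N ×ˢ Ioo 0 N) =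
      {0, N} ×ˢ {0, N} := by
  ext ⟨u, v⟩
  simp only [mem_inter_iff, mem_sdiff, mem_prod, mem_ofPred_eq, mem_insert_iff, mem_singleton_iff]
  constructor
  · rintro ⟨hq, ⟨hu, hv⟩, hnot⟩
    have key := dvd_iff_dvd_of_dvd_mul_sub_mul ha hb hq
    rw [Int.dvd_iff_eq_zero_or_eq_of_mem_Icc hu, Int.dvd_iff_eq_zero_or_eq_of_mem_Icc hv] at key
    simp only [mem_Icc, mem_Ioo] at hu hv hnot
    omega
  · rintro ⟨hu, hv⟩
    have hNu : N ∣ u := by rcases hu with rfl | rfl <;> simp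
    have hNv : N ∣ v := by rcases hv with rfl | rfl <;> simp
    refine ⟨dvd_sub (hNu.mul_left a) (hNv.mul_left b), ?_⟩
    simp only [mem_Icc, mem_Ioo]
    omega

end ResidueLattice

section GaussianLattice

variable {a b : ℤ}

/-- `(x + y i) * (a - b i)` in coordinates: `a² + b²` times the coordinates of `x + y i` in the
basis `a + b i`, `i (a + b i)`. -/
def mulConj (a b : ℤ) (p : ℤ × ℤ) : ℤ × ℤ := (a * p.1 + b * p.2, a * p.2 - b * p.1)

theorem IsCoprime.sq_add_sq_pos (hab : IsCoprime a b) : 0 < a ^ 2 + b ^ 2 := by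
  rcases eq_or_ne a 0 with rfl | ha
  · have hb : b ≠ 0 := by
      rintro rfl
      exact not_isCoprime_zero_zero hab
    positivity
  · positivity

theorem IsCoprime.isCoprime_sq_add_sq_left (hab : IsCoprime a b) :
    IsCoprime a (a ^ 2 + b ^ 2) := by
  have h := (hab.pow_right (n := 2)).add_mul_left_right a
  rwa [show b ^ 2 + a * a = a ^ 2 + b ^ 2 by ring] at h

theorem IsCoprime.isCoprime_sq_add_sq_right (hab : IsCoprime a b) :
    IsCoprime b (a ^ 2 + b ^ 2) :=
  add_comm (b ^ 2) _ ▸ hab.symm.isCoprime_sq_add_sq_left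

theorem mulConj_injective (h : a ^ 2 + b ^ 2 ≠ 0) : Function.Injective (mulConj a b) := by
  rintro ⟨x, y⟩ ⟨x', y'⟩ hp
  simp only [mulConj, Prod.mk.injEq] at hp
  obtain ⟨hu, hv⟩ := hp
  have hx : (a ^ 2 + b ^ 2) * x = (a ^ 2 + b ^ 2) * x' := by
    linear_combination a * hu - b * hv
  have hy : (a ^ 2 + b ^ 2) * y = (a ^ 2 + b ^ 2) * y' := by
    linear_combination b * hu + a * hv
  rw [mul_left_cancel₀ h hx, mul_left_cancel₀ h hy]

theorem range_mulConj (hab : IsCoprime a b) :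
    range (mulConj a b) = {q | a ^ 2 + b ^ 2 ∣ a * q.1 - b * q.2} := by
  ext ⟨u, v⟩
  constructor
  · rintro ⟨⟨x, y⟩, hxy⟩
    simp only [mulConj, Prod.mk.injEq] at hxy
    obtain ⟨rfl, rfl⟩ := hxy
    exact ⟨x, by ring⟩
  · rintro ⟨x, hx⟩
    obtain ⟨y, hy⟩ : a ^ 2 + b ^ 2 ∣ b * u + a * v :=
      hab.isCoprime_sq_add_sq_right.symm.dvd_of_dvd_mul_left
      ⟨u - a * x, by linear_combination (-a) * hx⟩
    have hN := hab.sq_add_sq_pos.ne'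
    refine ⟨(x, y), Prod.ext (mul_left_cancel₀ hN ?_) (mul_left_cancel₀ hN ?_)⟩
    · dsimp only [mulConj]
      linear_combination -a * hx - b * hy
    · dsimp only [mulConj]
      linear_combination b * hx - a * hy

end GaussianLattice

section LatticePointsInSquare

variable {K : Type*} [Field K] [LinearOrder K] [IsStrictOrderedRing K] {u N : ℤ}

theorem Int.cast_div_mem_Icc_zero_one_iff (hN : 0 < N) :
    (u : K) / N ∈ Icc (0 : K) 1 ↔ u ∈ Icc 0 N := by
  have hN' : (0 : K) < N := Int.cast_pos.mpr hN
  simp only [mem_Icc, le_div_iff₀ hN', div_le_one hN', zero_mul]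
  norm_cast

theorem Int.cast_div_mem_Ioo_zero_one_iff (hN : 0 < N) :
    (u : K) / N ∈ Ioo (0 : K) 1 ↔ u ∈ Ioo 0 N := by
  have hN' : (0 : K) < N := Int.cast_pos.mpr hN
  simp only [mem_Ioo, div_pos_iff_of_pos_right hN', div_lt_one hN']
  norm_cast

variable {a b : ℤ}

theorem intCast_add_mul_I_ne_zero (hN : a ^ 2 + b ^ 2 ≠ 0) : (a + b * I : ℂ) ≠ 0 := by
  intro h
  obtain ⟨rfl, rfl⟩ : a = 0 ∧ b = 0 := by simpa [Complex.ext_iff] using h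
  norm_num at hN

theorem intCast_add_mul_I_mem_smul_reProdIm_iff (hN : a ^ 2 + b ^ 2 ≠ 0) (p : ℤ × ℤ)
    (s t : Set ℝ) :
    (p.1 + p.2 * I : ℂ) ∈ (a + b * I : ℂ) • (s ×ℂ t) ↔
      ((mulConj a b p).1 : ℝ) / ((a ^ 2 + b ^ 2 : ℤ) : ℝ) ∈ s ∧
        ((mulConj a b p).2 : ℝ) / ((a ^ 2 + b ^ 2 : ℤ) : ℝ) ∈ t := by
  rw [mem_smul_set_iff_inv_smul_mem₀ (intCast_add_mul_I_ne_zero hN), smul_eq_mul, mem_reProdIm]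
  simp only [mulConj, mul_re, mul_im, inv_re, inv_im, add_re, add_im, intCast_re, intCast_im, I_re,
    I_im, normSq_apply, mul_zero, mul_one, sub_self, add_zero, zero_add, Int.cast_add, Int.cast_mul,
    Int.cast_pow, Int.cast_sub]
  ring_nf

theorem intCast_mem_interior_convexHull_square_iff (hN : 0 < a ^ 2 + b ^ 2) (p : ℤ × ℤ) :
    (p.1 + p.2 * I : ℂ) ∈ interior (convexHull ℝ
        ({0, (a : ℂ) + b * I, I * (a + b * I), (1 + I) * (a + b * I)} : Set ℂ)) ↔
      mulConj a b p ∈ Ioo 0 (a ^ 2 + b ^ 2) ×ˢ Ioo 0 (a ^ 2 + b ^ 2) := by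
  rw [interior_convexHull_square (intCast_add_mul_I_ne_zero hN.ne'),
    intCast_add_mul_I_mem_smul_reProdIm_iff hN.ne', Int.cast_div_mem_Ioo_zero_one_iff hN,
    Int.cast_div_mem_Ioo_zero_one_iff hN, mem_prod]

theorem intCast_mem_convexHull_square_iff (hN : 0 < a ^ 2 + b ^ 2) (p : ℤ × ℤ) :
    (p.1 + p.2 * I : ℂ) ∈ convexHull ℝ
        ({0, (a : ℂ) + b * I, I * (a + b * I), (1 + I) * (a + b * I)} : Set ℂ) ↔
      mulConj a b p ∈ Icc 0 (a ^ 2 + b ^ 2) ×ˢ Icc 0 (a ^ 2 + b ^ 2) := by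
  rw [convexHull_square, intCast_add_mul_I_mem_smul_reProdIm_iff hN.ne',
    Int.cast_div_mem_Icc_zero_one_iff hN, Int.cast_div_mem_Icc_zero_one_iff hN, mem_prod]

theorem setOf_intCast_mem_interior_convexHull_square (hN : 0 < a ^ 2 + b ^ 2) :
    {p : ℤ × ℤ | (p.1 + p.2 * I : ℂ) ∈ interior (convexHull ℝ
        ({0, (a : ℂ) + b * I, I * (a + b * I), (1 + I) * (a + b * I)} : Set ℂ))} =
      mulConj a b ⁻¹' (Ioo 0 (a ^ 2 + b ^ 2) ×ˢ Ioo 0 (a ^ 2 + b ^ 2)) :=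
  ext (intCast_mem_interior_convexHull_square_iff hN)

theorem setOf_intCast_mem_frontier_convexHull_square (hN : 0 < a ^ 2 + b ^ 2) :
    {p : ℤ × ℤ | (p.1 + p.2 * I : ℂ) ∈ frontier (convexHull ℝ
        ({0, (a : ℂ) + b * I, I * (a + b * I), (1 + I) * (a + b * I)} : Set ℂ))} =
      mulConj a b ⁻¹' (Icc 0 (a ^ 2 + b ^ 2) ×ˢ Icc 0 (a ^ 2 + b ^ 2) \
        Ioo 0 (a ^ 2 + b ^ 2) ×ˢ Ioo 0 (a ^ 2 + b ^ 2)) := by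
  ext p
  rw [mem_ofPred_eq, ((toFinite _).isCompact_convexHull ℝ).isClosed.frontier_eq, mem_sdiff,
    intCast_mem_convexHull_square_iff hN, intCast_mem_interior_convexHull_square_iff hN]
  rfl

end LatticePointsInSquare

open Complex in
theorem fundamental_square_lattice_points_general (a b : ℤ)
    (hab : Int.gcd a b = 1) :
    (({p : ℤ × ℤ | ((p.1 : ℂ) + (p.2 : ℂ) * I) ∈
          interior (convexHull ℝ
            ({0, (a : ℂ) + (b : ℂ) * I, I * ((a : ℂ) + (b : ℂ) * I),
              (1 + I) * ((a : ℂ) + (b : ℂ) * I)} : Set ℂ))}.ncard : ℤ)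
        = a ^ 2 + b ^ 2 - 1) ∧
    ({p : ℤ × ℤ | ((p.1 : ℂ) + (p.2 : ℂ) * I) ∈
          frontier (convexHull ℝ
            ({0, (a : ℂ) + (b : ℂ) * I, I * ((a : ℂ) + (b : ℂ) * I),
              (1 + I) * ((a : ℂ) + (b : ℂ) * I)} : Set ℂ))}.ncard = 4) := by
  have hcop : IsCoprime a b := Int.isCoprime_iff_gcd_eq_one.mpr hab
  have hN : 0 < a ^ 2 + b ^ 2 := hcop.sq_add_sq_pos
  have ha : IsCoprime a (a ^ 2 + b ^ 2) := hcop.isCoprime_sq_add_sq_left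
  have hb : IsCoprime b (a ^ 2 + b ^ 2) := hcop.isCoprime_sq_add_sq_right
  have hcard (s : Set (ℤ × ℤ)) :
      (mulConj a b ⁻¹' s).ncard = ({q | a ^ 2 + b ^ 2 ∣ a * q.1 - b * q.2} ∩ s).ncard := by
    rw [← preimage_inter_range, ncard_preimage_of_injective_subset_range
      (mulConj_injective hN.ne') inter_subset_right, range_mulConj hcop, inter_comm]
  rw [setOf_intCast_mem_interior_convexHull_square hN,
    setOf_intCast_mem_frontier_convexHull_square hN, hcard, hcard,
    ncard_dvd_mul_sub_mul_inter_Ioo ha hb hN, dvd_mul_sub_mul_inter_Icc_diff_Ioo ha hb hN.le,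
    ncard_prod, ncard_pair hN.ne]
  exact ⟨rfl, rfl⟩

open Complex in
theorem fundamental_square_lattice_points (a b : ℤ)
    (hab : Int.gcd a b = 1) (h0 : ¬(a = 0 ∧ b = 0)) :
    (({p : ℤ × ℤ | ((p.1 : ℂ) + (p.2 : ℂ) * I) ∈
          interior (convexHull ℝ
            ({0, (a : ℂ) + (b : ℂ) * I, I * ((a : ℂ) + (b : ℂ) * I),
              (1 + I) * ((a : ℂ) + (b : ℂ) * I)} : Set ℂ))}.ncard : ℤ)
        = a ^ 2 + b ^ 2 - 1) ∧
    ({p : ℤ × ℤ | ((p.1 : ℂ) + (p.2 : ℂ) * I) ∈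
          frontier (convexHull ℝ
            ({0, (a : ℂ) + (b : ℂ) * I, I * ((a : ℂ) + (b : ℂ) * I),
              (1 + I) * ((a : ℂ) + (b : ℂ) * I)} : Set ℂ))}.ncard = 4) :=
  fundamental_square_lattice_points_general a b hab
end
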